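/- A Set-functor admits a locally monotone extension to the category of sets and relations if and only if it preserves weak pullbacks, and in that case the locally monotone extension is unique and equals the Barr extension. -/

import Mathlib

open CategoryTheory

/-- Composition of relations (the definition `Rel.comp` of the older Mathlib). -/
def Rel.comp {α β γ : Type*} (r : Rel α β) (s : Rel β γ) : Rel α γ :=
  fun x z => ∃ y, r x y ∧ s y z

/-- The graph of a function, as a relation. -/
def graphRel {X Y : Type} (f : X → Y) : Rel X Y := fun x y => f x = y

/-- An extension of a `Set`-endofunctor `F` to the category of sets and relations:
an assignment on relations that preserves relational composition and agrees with `F`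
on (graphs of) functions. -/
structure RelExtension (F : Type ⥤ Type) where
  ext : ∀ {X Y : Type}, Rel X Y → Rel (F.obj X) (F.obj Y)
  ext_comp : ∀ {X Y Z : Type} (r : Rel X Y) (s : Rel Y Z),
    ext (r.comp s) = (ext r).comp (ext s)
  ext_fun : ∀ {X Y : Type} (f : X → Y), ext (graphRel f) = graphRel (F.map (TypeCat.ofHom f))
/-- A commuting square of functions is a weak pullback if every competing cone factors
through it (not necessarily uniquely). -/
def IsWeakPullback {A B C D : Type} (p : A → B) (q : A → C) (f : B → D) (g : C → D) : Prop :=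
  (∀ a, f (p a) = g (q a)) ∧ ∀ b c, f b = g c → ∃ a, p a = b ∧ q a = c

/-- A functor preserves weak pullbacks if it maps weak pullback squares to weak pullback
squares. -/
def PreservesWeakPullbacks (F : Type ⥤ Type) : Prop :=
  ∀ (A B C D : Type) (p : A → B) (q : A → C) (f : B → D) (g : C → D),
    IsWeakPullback p q f g → IsWeakPullback (F.map (TypeCat.ofHom p)) (F.map (TypeCat.ofHom q))
      (F.map (TypeCat.ofHom f)) (F.map (TypeCat.ofHom g))

/-- The Barr extension of a functor, defined via the canonical span factorization of a
relation. -/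
def barrExt (F : Type ⥤ Type) {X Y : Type} (r : Rel X Y) : Rel (F.obj X) (F.obj Y) :=
  fun a b => ∃ c : F.obj {p : X × Y // r p.1 p.2},
    F.map (TypeCat.ofHom (fun p : {p : X × Y // r p.1 p.2} => p.1.1)) c = a ∧
      F.map (TypeCat.ofHom (fun p : {p : X × Y // r p.1 p.2} => p.1.2)) c = b

/-- Local monotonicity of an extension. -/
def LocallyMonotone {F : Type ⥤ Type} (E : RelExtension F) : Prop :=
  ∀ (X Y : Type) (r s : Rel X Y), r ≤ s → E.ext r ≤ E.ext s

/-! In `Rel` the converse `f°` (`flip (graphRel f)`) of a function is right adjoint to `f`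
(`id ≤ f ⨾ f°` and `f° ⨾ f ≤ id`). A locally monotone extension preserves these inequalities,
so it sends `f°` to the right adjoint `(F f)°` of `F f`; as every relation is the span
`π₁° ⨾ π₂` of its projections, the extension is forced to be the Barr extension. A square is a
weak pullback exactly when `p° ⨾ q = f ⨾ g°`, an identity any such extension carries over to
`F`, so `F` preserves weak pullbacks.

Conversely, `F` preserves surjections, so the Barr extension of a span `f° ⨾ g` is
`(F f)° ⨾ F g` whether or not the span is jointly injective. Composing two tabulations through
their pullback then shows that the Barr extension preserves composition as soon as `F`
preserves that weak pullback. -/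

local infixl:80 " ⨾ " => Rel.comp

section Relations

variable {A B C D X Y Z : Type}

theorem flip_graphRel_id_comp (r : Rel X Y) : flip (graphRel fun x : X => x) ⨾ r = r := by
  funext x y
  exact propext ⟨fun ⟨_, hx, hr⟩ => hx ▸ hr, fun hr => ⟨x, rfl, hr⟩⟩

theorem flip_graphRel_fst_comp_graphRel_snd (r : Rel X Y) :
    flip (graphRel fun p : {p : X × Y // r p.1 p.2} => p.1.1) ⨾
      graphRel (fun p : {p : X × Y // r p.1 p.2} => p.1.2) = r := by
  funext x y
  refine propext ⟨?_, fun h => ⟨⟨(x, y), h⟩, rfl, rfl⟩⟩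
  rintro ⟨⟨_, h⟩, rfl, rfl⟩
  exact h

theorem flip_graphRel_comp_graphRel_of_surjective {T : Type} {e : A → T} (he : e.Surjective)
    (p : T → X) (q : T → Y) :
    flip (graphRel (p ∘ e)) ⨾ graphRel (q ∘ e) = flip (graphRel p) ⨾ graphRel q := by
  funext x y
  refine propext ⟨fun ⟨a, ha⟩ => ⟨e a, ha⟩, ?_⟩
  rintro ⟨t, ht⟩
  obtain ⟨a, rfl⟩ := he t
  exact ⟨a, ht⟩

theorem isWeakPullback_iff (p : A → B) (q : A → C) (f : B → D) (g : C → D) :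
    IsWeakPullback p q f g ↔ flip (graphRel p) ⨾ graphRel q = graphRel f ⨾ flip (graphRel g) := by
  constructor
  · rintro ⟨hcomm, hfac⟩
    funext b c
    refine propext ⟨?_, fun ⟨d, hb, hc⟩ => hfac b c (hb.trans hc.symm)⟩
    rintro ⟨a, rfl, rfl⟩
    exact ⟨f (p a), rfl, (hcomm a).symm⟩
  · intro h
    refine ⟨fun a => ?_, fun b c hbc => ?_⟩
    · obtain ⟨d, hd, hd'⟩ := (h ▸ ⟨a, rfl, rfl⟩ : (graphRel f ⨾ flip (graphRel g)) (p a) (q a))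
      exact hd.trans hd'.symm
    · exact (h ▸ ⟨f b, rfl, hbc.symm⟩ : (flip (graphRel p) ⨾ graphRel q) b c)

theorem isWeakPullback_subtype (f : B → D) (g : C → D) :
    IsWeakPullback (fun w : {w : B × C // f w.1 = g w.2} => w.1.1) (fun w => w.1.2) f g :=
  ⟨fun w => w.2, fun b c h => ⟨⟨(b, c), h⟩, rfl, rfl⟩⟩

theorem span_comp_span_of_isWeakPullback {P Q W : Type} {p₁ : P → X} {q₁ : P → Y} {p₂ : Q → Y}
    {q₂ : Q → Z} {π₁ : W → P} {π₂ : W → Q} (h : IsWeakPullback π₁ π₂ q₁ p₂) :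
    flip (graphRel p₁) ⨾ graphRel q₁ ⨾ (flip (graphRel p₂) ⨾ graphRel q₂) =
      flip (graphRel (p₁ ∘ π₁)) ⨾ graphRel (q₂ ∘ π₂) := by
  funext x z
  refine propext ⟨?_, ?_⟩
  · rintro ⟨y, ⟨a, rfl, rfl⟩, b, hb, rfl⟩
    obtain ⟨w, rfl, rfl⟩ := h.2 a b hb.symm
    exact ⟨w, rfl, rfl⟩
  · rintro ⟨w, rfl, rfl⟩
    exact ⟨q₁ (π₁ w), ⟨π₁ w, rfl, rfl⟩, π₂ w, (h.1 w).symm, rfl⟩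

theorem le_graphRel_comp_flip_graphRel (f : X → Y) :
    graphRel (fun x : X => x) ≤ graphRel f ⨾ flip (graphRel f) := by
  rintro x _ rfl
  exact ⟨f x, rfl, rfl⟩

theorem flip_graphRel_comp_graphRel_le (f : X → Y) :
    flip (graphRel f) ⨾ graphRel f ≤ graphRel fun y : Y => y := by
  rintro _ _ ⟨x, rfl, rfl⟩
  rfl

theorem eq_flip_graphRel_of_adjoint {f : X → Y} {s : Rel Y X}
    (hunit : graphRel (fun x : X => x) ≤ graphRel f ⨾ s)
    (hcounit : s ⨾ graphRel f ≤ graphRel fun y : Y => y) : s = flip (graphRel f) := by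
  funext y x
  refine propext ⟨fun h => (hcounit y (f x) ⟨x, h, rfl⟩).symm, ?_⟩
  rintro rfl
  obtain ⟨_, rfl, h⟩ := hunit x x rfl
  exact h

end Relations

section Functor

variable (F : Type ⥤ Type) {A X Y Z : Type}

theorem map_ofHom_comp (f : X → Y) (g : Y → Z) :
    ⇑(F.map (↾(g ∘ f))) = ⇑(F.map (↾g)) ∘ ⇑(F.map (↾f)) :=
  funext (F.map_comp_apply (↾f) (↾g))

theorem graphRel_map_ofHom_id : graphRel (F.map (↾fun x : X => x)) = graphRel fun x => x :=
  congrArg graphRel (funext (F.map_id_apply X))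

theorem map_ofHom_surjective {f : X → Y} (hf : f.Surjective) : (⇑(F.map (↾f))).Surjective := by
  intro y
  refine ⟨F.map (↾(Function.surjInv hf)) y, ?_⟩
  rw [← Function.comp_apply (f := ⇑(F.map (↾f))), ← map_ofHom_comp,
    show f ∘ Function.surjInv hf = fun y => y from funext (Function.surjInv_eq hf)]
  exact F.map_id_apply Y y

theorem barrExt_eq_comp (r : Rel X Y) :
    barrExt F r = flip (graphRel (F.map (↾fun p : {p : X × Y // r p.1 p.2} => p.1.1))) ⨾
      graphRel (F.map (↾fun p : {p : X × Y // r p.1 p.2} => p.1.2)) :=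
  rfl

theorem barrExt_span (f : A → X) (g : A → Y) :
    barrExt F (flip (graphRel f) ⨾ graphRel g) =
      flip (graphRel (F.map (↾f))) ⨾ graphRel (F.map (↾g)) := by
  let e : A → {p : X × Y // (flip (graphRel f) ⨾ graphRel g) p.1 p.2} :=
    fun a => ⟨(f a, g a), a, rfl, rfl⟩
  have he : e.Surjective := by
    rintro ⟨_, a, hf, hg⟩
    exact ⟨a, Subtype.ext (Prod.ext hf hg)⟩
  rw [barrExt_eq_comp, ← flip_graphRel_comp_graphRel_of_surjective (map_ofHom_surjective F he),
    ← map_ofHom_comp, ← map_ofHom_comp]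

theorem barrExt_graphRel (f : X → Y) :
    barrExt F (graphRel f) = graphRel (F.map (↾f)) := by
  conv_lhs => rw [← flip_graphRel_id_comp (graphRel f)]
  rw [barrExt_span, graphRel_map_ofHom_id, flip_graphRel_id_comp]

theorem barrExt_mono {r s : Rel X Y} (h : r ≤ s) : barrExt F r ≤ barrExt F s := by
  rintro a b ⟨c, rfl, rfl⟩
  exact ⟨F.map (↾fun p => ⟨p.1, h _ _ p.2⟩) c, (F.map_comp_apply _ _ c).symm,
    (F.map_comp_apply _ _ c).symm⟩

theorem barrExt_comp (hF : PreservesWeakPullbacks F) (r : Rel X Y) (s : Rel Y Z) :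
    barrExt F (r ⨾ s) = barrExt F r ⨾ barrExt F s := by
  have hW := isWeakPullback_subtype (fun p : {p : X × Y // r p.1 p.2} => p.1.2)
    (fun p : {p : Y × Z // s p.1 p.2} => p.1.1)
  conv_lhs => rw [← flip_graphRel_fst_comp_graphRel_snd r,
    ← flip_graphRel_fst_comp_graphRel_snd s, span_comp_span_of_isWeakPullback hW]
  rw [barrExt_span, barrExt_eq_comp, barrExt_eq_comp,
    span_comp_span_of_isWeakPullback (hF _ _ _ _ _ _ _ _ hW), ← map_ofHom_comp, ← map_ofHom_comp]

end Functor

noncomputable def barrRelExtension (F : Type ⥤ Type) (hF : PreservesWeakPullbacks F) :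
    RelExtension F where
  ext := barrExt F
  ext_comp := barrExt_comp F hF
  ext_fun := barrExt_graphRel F

theorem locallyMonotone_barrRelExtension (F : Type ⥤ Type) (hF : PreservesWeakPullbacks F) :
    LocallyMonotone (barrRelExtension F hF) :=
  fun _ _ _ _ => barrExt_mono F

namespace RelExtension

variable {F : Type ⥤ Type} (E : RelExtension F) {A C X Y : Type}

theorem ext_graphRel_id : E.ext (graphRel fun x : X => x) = graphRel fun x => x := by
  rw [E.ext_fun, graphRel_map_ofHom_id]

theorem ext_flip_graphRel (hE : LocallyMonotone E) (f : X → Y) :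
    E.ext (flip (graphRel f)) = flip (graphRel (F.map (↾f))) := by
  have hunit := hE _ _ _ _ (le_graphRel_comp_flip_graphRel f)
  have hcounit := hE _ _ _ _ (flip_graphRel_comp_graphRel_le f)
  rw [ext_graphRel_id, E.ext_comp, E.ext_fun] at hunit hcounit
  exact eq_flip_graphRel_of_adjoint hunit hcounit

theorem ext_span (hE : LocallyMonotone E) (f : A → X) (g : A → Y) :
    E.ext (flip (graphRel f) ⨾ graphRel g) =
      flip (graphRel (F.map (↾f))) ⨾ graphRel (F.map (↾g)) := by
  rw [E.ext_comp, E.ext_flip_graphRel hE, E.ext_fun]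

theorem ext_cospan (hE : LocallyMonotone E) (f : X → C) (g : Y → C) :
    E.ext (graphRel f ⨾ flip (graphRel g)) =
      graphRel (F.map (↾f)) ⨾ flip (graphRel (F.map (↾g))) := by
  rw [E.ext_comp, E.ext_flip_graphRel hE, E.ext_fun]

theorem ext_eq_barrExt (hE : LocallyMonotone E) (r : Rel X Y) : E.ext r = barrExt F r := by
  rw [← flip_graphRel_fst_comp_graphRel_snd r, E.ext_span hE, barrExt_span]

theorem preservesWeakPullbacks (hE : LocallyMonotone E) : PreservesWeakPullbacks F := by
  intro A B C D p q f g h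
  rw [isWeakPullback_iff] at h ⊢
  rw [← E.ext_span hE, ← E.ext_cospan hE, h]

end RelExtension

theorem stmt8 (F : Type ⥤ Type) :
    ((∃ E : RelExtension F, LocallyMonotone E) ↔ PreservesWeakPullbacks F) ∧
    (∀ E : RelExtension F, LocallyMonotone E →
      ∀ (X Y : Type) (r : Rel X Y), E.ext r = barrExt F r) :=
  ⟨⟨fun ⟨E, hE⟩ => E.preservesWeakPullbacks hE,
    fun hF => ⟨barrRelExtension F hF, locallyMonotone_barrRelExtension F hF⟩⟩,
    fun E hE _ _ r => E.ext_eq_barrExt hE r⟩
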